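/- arXiv:2507.19659 — 6 statements merged into one kernel-verified Lean document; each statement's English description precedes it below -/
import Mathlib

section
/- Likelihood lower bound (Lemma 1): Let A be a finite alphabet with |A| = a ≥ 2, q = a−1, 0 < γmin ≤ γmax, λ ≥ max(γmax, γmin + γmax/q), and let Q̃ be a rate matrix on A^n whose off-diagonal entries vanish when d_H(u,v) > 1, lie in [γmin, γmax] when d_H(u,v) = 1, and whose rows sum to zero. Set λ_R = nqλ and R̃ = I + Q̃/λ_R. Then for any x, y ∈ A^n with r := d_H(x,y) and any T > 0, p_{(T,Q̃)}(y|x) := e^{−λ_R T} Σ_{m≥r} (λ_R T)^m/m! · (R̃^m)_{x,y} ≥ exp(−λ_R T + r·log(T·γmin)), i.e. p_{(T,Q̃)}(y|x) ≥ e^{−λ_R T}·(T·γmin)^r. -/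
/-!
Uniformization. Every row of `Q̃` has at most `n(a-1)` nonzero off-diagonal entries, each at most
`γmax ≤ λ`, so `Q̃_{uu} ≥ -λ_R` and `R̃ = I + Q̃/λ_R` is a stochastic matrix. Hence all terms of the
series are nonnegative and dominated by `(λ_R T)^m/m!`, and the series is at least its `m = r`
term. Correcting the `r` coordinates in which `x` and `y` differ, in any of the `r!` orders, is a
path of `r` substitutions of `R̃`-weight at least `(γmin/λ_R)^r`, so
`(R̃^r)_{x,y} ≥ r! (γmin/λ_R)^r` and the `m = r` term is at least `(T γmin)^r`.
-/

open Finset Matrix Function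
open scoped Nat

section Uniformization

variable {ι : Type*} [Fintype ι] [DecidableEq ι]

lemma one_add_inv_smul_mem_rowStochastic {Q : Matrix ι ι ℝ} {c : ℝ} (hc : 0 ≤ c)
    (hoff : ∀ u v, u ≠ v → 0 ≤ Q u v) (hdiag : ∀ u, -c ≤ Q u u)
    (hrow : ∀ u, ∑ v, Q u v = 0) :
    1 + c⁻¹ • Q ∈ rowStochastic ℝ ι := by
  refine mem_rowStochastic_iff_sum.2 ⟨fun u v => ?_, fun u => ?_⟩
  · rcases eq_or_ne u v with rfl | huv
    · rcases hc.eq_or_lt with rfl | hc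
      · simp
      · have := mul_le_mul_of_nonneg_left (hdiag u) (inv_nonneg.2 hc.le)
        rw [mul_neg, inv_mul_cancel₀ hc.ne'] at this
        simp only [Matrix.add_apply, one_apply_eq, Matrix.smul_apply, smul_eq_mul]
        linarith
    · simpa [one_apply_ne huv] using mul_nonneg (inv_nonneg.2 hc) (hoff u v huv)
  · simp [sum_add_distrib, ← mul_sum, hrow, one_apply]

lemma pow_div_factorial_mul_pow_apply_le_tsum {R : Matrix ι ι ℝ} (hR : R ∈ rowStochastic ℝ ι)
    {t : ℝ} (ht : 0 ≤ t) (x y : ι) (r : ℕ) :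
    t ^ r / r ! * (R ^ r) x y ≤ ∑' m, if r ≤ m then t ^ m / m ! * (R ^ m) x y else 0 := by
  have hpow (m : ℕ) : R ^ m ∈ rowStochastic ℝ ι := pow_mem hR m
  have hnonneg (m : ℕ) : 0 ≤ if r ≤ m then t ^ m / m ! * (R ^ m) x y else 0 := by
    split_ifs
    · exact mul_nonneg (by positivity) (nonneg_of_mem_rowStochastic (hpow m))
    · exact le_rfl
  have hle (m : ℕ) : (if r ≤ m then t ^ m / m ! * (R ^ m) x y else 0) ≤ t ^ m / m ! := by
    split_ifs
    · exact mul_le_of_le_one_right (by positivity) (le_one_of_mem_rowStochastic (hpow m))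
    · positivity
  have hsum := Summable.of_nonneg_of_le hnonneg hle (Real.summable_pow_div_factorial t)
  simpa using hsum.le_tsum r fun m _ => hnonneg m

end Uniformization

section Hamming

variable {ι : Type*} {β : ι → Type*} [Fintype ι] [DecidableEq ι] [∀ i, DecidableEq (β i)]

lemma hammingDist_update_eq_one {x : ∀ i, β i} {i : ι} {b : β i} (h : x i ≠ b) :
    hammingDist x (update x i b) = 1 := by
  rw [hammingDist, card_eq_one]
  refine ⟨i, ?_⟩
  ext j
  by_cases hj : j = i
  · subst hj; simp [h]
  · simp [hj]

lemma hammingDist_update_add_one {x y : ∀ i, β i} {i : ι} (h : x i ≠ y i) :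
    hammingDist (update x i (y i)) y + 1 = hammingDist x y := by
  have herase : ({j | update x i (y i) j ≠ y j} : Finset ι)
      = ({j | x j ≠ y j} : Finset ι).erase i := by
    ext j
    by_cases hj : j = i
    · subst hj; simp
    · simp [hj]
  rw [hammingDist, hammingDist, herase, card_erase_add_one (by simp [h])]

lemma exists_eq_update_of_hammingDist_eq_one {u v : ∀ i, β i} (h : hammingDist u v = 1) :
    ∃ i, u i ≠ v i ∧ v = update u i (v i) := by
  obtain ⟨i, hi⟩ := card_eq_one.1 h
  have hdiff : ∀ j, u j ≠ v j ↔ j = i := fun j => by simpa using congrArg (j ∈ ·) hi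
  refine ⟨i, (hdiff i).2 rfl, funext fun j => ?_⟩
  by_cases hj : j = i
  · subst hj; simp
  · simpa [hj, eq_comm] using (not_congr (hdiff j)).2 hj

variable [∀ i, Fintype (β i)]

lemma card_filter_hammingDist_eq_one_le (u : ∀ i, β i) :
    #{v | hammingDist u v = 1} ≤ ∑ i, (Fintype.card (β i) - 1) :=
  calc #{v | hammingDist u v = 1}
      ≤ #(univ.biUnion fun i => (univ.erase (u i)).image (update u i)) := by
        refine card_le_card fun v hv => ?_
        obtain ⟨i, hi, hv⟩ := exists_eq_update_of_hammingDist_eq_one (mem_filter.1 hv).2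
        simp only [mem_biUnion, mem_image, mem_erase, mem_univ, and_true, true_and]
        exact ⟨i, v i, Ne.symm hi, hv.symm⟩
    _ ≤ ∑ i, #((univ.erase (u i)).image (update u i)) := card_biUnion_le
    _ ≤ ∑ i, (Fintype.card (β i) - 1) :=
        sum_le_sum fun i _ => card_image_le.trans (by simp [card_erase_of_mem])

theorem factorial_mul_pow_le_pow_hammingDist_apply {M : Matrix (∀ i, β i) (∀ i, β i) ℝ}
    (hM : ∀ u v, 0 ≤ M u v) {ε : ℝ} (hε : 0 ≤ ε)
    (hstep : ∀ u v, hammingDist u v = 1 → ε ≤ M u v) (x y : ∀ i, β i) :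
    (hammingDist x y)! * ε ^ hammingDist x y ≤ (M ^ hammingDist x y) x y := by
  induction hr : hammingDist x y generalizing x with
  | zero => simp [hammingDist_eq_zero.1 hr]
  | succ r ih =>
    set D : Finset ι := {i | x i ≠ y i}
    have hD : #D = r + 1 := hr
    have hinj : Set.InjOn (fun i => update x i (y i)) D := by
      intro i hi j _ hij
      by_contra hne
      have := congrFun hij i
      simp only [update_self, update_of_ne hne] at this
      exact (mem_filter.1 hi).2 this.symm
    have hterm : ∀ z ∈ D.image fun i => update x i (y i),
        ε * (r ! * ε ^ r) ≤ M x z * (M ^ r) z y := by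
      simp only [mem_image, D, mem_filter, mem_univ, true_and]
      rintro _ ⟨i, hi, rfl⟩
      exact mul_le_mul (hstep _ _ (hammingDist_update_eq_one hi))
        (ih _ (by have := hammingDist_update_add_one hi; omega)) (by positivity) (hM _ _)
    calc ((r + 1)! : ℝ) * ε ^ (r + 1)
        = #(D.image fun i => update x i (y i)) • (ε * (r ! * ε ^ r)) := by
          rw [Finset.card_image_of_injOn hinj, hD, Nat.factorial_succ, nsmul_eq_mul]
          push_cast; ring
      _ ≤ ∑ z ∈ D.image fun i => update x i (y i), M x z * (M ^ r) z y :=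
          card_nsmul_le_sum _ _ _ hterm
      _ ≤ ∑ z, M x z * (M ^ r) z y :=
          sum_le_univ_sum_of_nonneg fun z => mul_nonneg (hM _ _) (pow_apply_nonneg hM r _ _)
      _ = (M ^ (r + 1)) x y := by rw [_root_.pow_succ', mul_apply]

lemma neg_mul_le_apply_self_of_sum_eq_zero {Q : Matrix (∀ i, β i) (∀ i, β i) ℝ} {γ : ℝ}
    (hγ : 0 ≤ γ) (hnbr : ∀ u v, hammingDist u v = 1 → Q u v ≤ γ)
    (hzero : ∀ u v, u ≠ v → hammingDist u v ≠ 1 → Q u v = 0)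
    (hrow : ∀ u, ∑ v, Q u v = 0) (u : ∀ i, β i) :
    -((∑ i, (Fintype.card (β i) - 1) : ℕ) * γ) ≤ Q u u := by
  have hsplit := add_sum_erase univ (Q u) (mem_univ u)
  have hoff : ∑ v ∈ univ.erase u, Q u v = ∑ v with hammingDist u v = 1, Q u v := by
    refine (sum_subset (fun v hv => mem_erase.2 ⟨?_, mem_univ v⟩) fun v hv hnot => ?_).symm
    · rintro rfl; simp at hv
    · exact hzero u v (ne_of_mem_erase hv).symm (by simpa using hnot)
  have hbound : ∑ v with hammingDist u v = 1, Q u v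
      ≤ #({v | hammingDist u v = 1} : Finset (∀ i, β i)) • γ :=
    sum_le_card_nsmul _ _ _ fun v hv => hnbr u v (mem_filter.1 hv).2
  have hcard : (#({v | hammingDist u v = 1} : Finset (∀ i, β i)) : ℝ)
      ≤ (∑ i, (Fintype.card (β i) - 1) : ℕ) := by
    exact_mod_cast card_filter_hammingDist_eq_one_le u
  rw [nsmul_eq_mul] at hbound
  nlinarith [hrow u]

lemma one_add_inv_smul_mem_rowStochastic_of_hammingDist {Q : Matrix (∀ i, β i) (∀ i, β i) ℝ}
    {γmin γmax c : ℝ} (hγmin : 0 ≤ γmin) (hγ : γmin ≤ γmax)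
    (hnbr : ∀ u v, hammingDist u v = 1 → Q u v ∈ Set.Icc γmin γmax)
    (hzero : ∀ u v, u ≠ v → hammingDist u v ≠ 1 → Q u v = 0)
    (hrow : ∀ u, ∑ v, Q u v = 0) (hc : (∑ i, (Fintype.card (β i) - 1) : ℕ) * γmax ≤ c) :
    1 + c⁻¹ • Q ∈ rowStochastic ℝ (∀ i, β i) := by
  have hγmax : 0 ≤ γmax := hγmin.trans hγ
  have hdiag (u : ∀ i, β i) : -c ≤ Q u u := (neg_le_neg hc).trans
    (neg_mul_le_apply_self_of_sum_eq_zero hγmax (fun u v h => (hnbr u v h).2) hzero hrow u)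
  refine one_add_inv_smul_mem_rowStochastic ((mul_nonneg (Nat.cast_nonneg _) hγmax).trans hc)
    (fun u v huv => ?_) hdiag hrow
  by_cases h : hammingDist u v = 1
  · exact hγmin.trans (hnbr u v h).1
  · exact (hzero u v huv h).ge

end Hamming

/-- **Likelihood lower bound (Lemma 1).** With `λ_R = nqλ` and `R̃ = I + Q̃/λ_R`,
`p_{(T,Q̃)}(y|x) = e^{−λ_R T} Σ_{m≥r} (λ_R T)^m/m! (R̃^m)_{x,y} ≥ e^{−λ_R T + r log(T γmin)}`,
i.e. `p ≥ e^{−λ_R T} (T γmin)^r`. -/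
theorem likelihood_lower_bound
    (a n : ℕ) (ha : 2 ≤ a)
    (γmin γmax lam : ℝ)
    (hγmin : 0 < γmin) (hγ : γmin ≤ γmax)
    (hlam : max γmax (γmin + γmax / ((a : ℝ) - 1)) ≤ lam)
    (Q : Matrix (Fin n → Fin a) (Fin n → Fin a) ℝ)
    (hQ1 : ∀ u v : Fin n → Fin a, hammingDist u v = 1 → Q u v ∈ Set.Icc γmin γmax)
    (hQ2 : ∀ u v : Fin n → Fin a, u ≠ v → hammingDist u v ≠ 1 → Q u v = 0)
    (hQ3 : ∀ u : Fin n → Fin a, ∑ v, Q u v = 0)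
    (x y : Fin n → Fin a) (T : ℝ) (hT : 0 < T) :
    (Real.exp (-(((n : ℝ) * ((a : ℝ) - 1) * lam) * T)
        + (hammingDist x y : ℝ) * Real.log (T * γmin))
      ≤ Real.exp (-(((n : ℝ) * ((a : ℝ) - 1) * lam) * T)) *
        ∑' m : ℕ, if hammingDist x y ≤ m then
          (((n : ℝ) * ((a : ℝ) - 1) * lam) * T) ^ m / (Nat.factorial m) *
            ((1 + (((n : ℝ) * ((a : ℝ) - 1) * lam))⁻¹ • Q) ^ m) x y
          else 0)
    ∧ (Real.exp (-(((n : ℝ) * ((a : ℝ) - 1) * lam) * T)) * (T * γmin) ^ (hammingDist x y)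
      ≤ Real.exp (-(((n : ℝ) * ((a : ℝ) - 1) * lam) * T)) *
        ∑' m : ℕ, if hammingDist x y ≤ m then
          (((n : ℝ) * ((a : ℝ) - 1) * lam) * T) ^ m / (Nat.factorial m) *
            ((1 + (((n : ℝ) * ((a : ℝ) - 1) * lam))⁻¹ • Q) ^ m) x y
          else 0) := by
  set c : ℝ := (n : ℝ) * ((a : ℝ) - 1) * lam
  set r := hammingDist x y
  have hq : (1 : ℝ) ≤ (a : ℝ) - 1 := le_sub_iff_add_le.2 (by norm_num; exact_mod_cast ha)
  have hlam : γmax ≤ lam := (le_max_left _ _).trans hlam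
  have hc : 0 ≤ c := mul_nonneg (by positivity) (by linarith)
  have hR : 1 + c⁻¹ • Q ∈ rowStochastic ℝ (Fin n → Fin a) := by
    refine one_add_inv_smul_mem_rowStochastic_of_hammingDist hγmin.le hγ hQ1 hQ2 hQ3 ?_
    simp only [Fintype.card_fin, sum_const, card_univ, smul_eq_mul]
    push_cast [Nat.cast_sub (by omega : 1 ≤ a)]
    exact mul_le_mul_of_nonneg_left hlam (by positivity)
  have hstep (u v : Fin n → Fin a) (h : hammingDist u v = 1) :
      γmin ≤ (c • (1 + c⁻¹ • Q)) u v := by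
    have huv : u ≠ v := by rintro rfl; simp at h
    have hn : 1 ≤ n := by simpa [h] using hammingDist_le_card_fintype (x := u) (y := v)
    have hc : c ≠ 0 := (mul_pos (mul_pos (by exact_mod_cast hn) (by linarith)) (by linarith)).ne'
    simpa [one_apply_ne huv, hc] using (hQ1 u v h).1
  have hpath := factorial_mul_pow_le_pow_hammingDist_apply (M := c • (1 + c⁻¹ • Q))
    (fun u v => mul_nonneg hc (nonneg_of_mem_rowStochastic hR)) hγmin.le hstep x y
  have hterm : (T * γmin) ^ r ≤ (c * T) ^ r / r ! * ((1 + c⁻¹ • Q) ^ r) x y := by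
    rw [smul_pow, Matrix.smul_apply, smul_eq_mul] at hpath
    calc (T * γmin) ^ r = T ^ r / r ! * (r ! * γmin ^ r) := by field_simp; rw [mul_pow]
      _ ≤ T ^ r / r ! * (c ^ r * ((1 + c⁻¹ • Q) ^ r) x y) := by gcongr
      _ = _ := by ring_nf
  have hmain := mul_le_mul_of_nonneg_left
    (hterm.trans (pow_div_factorial_mul_pow_apply_le_tsum hR (by positivity) x y r))
    (Real.exp_pos (-(c * T))).le
  refine ⟨?_, hmain⟩
  rwa [Real.exp_add, Real.exp_nat_mul, Real.exp_log (by positivity)]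
end

section
/- Poisson lower-tail bound for the uniformized series (Lemma 2): For all reals λ_R > 0 and 0 < t ≤ T, the truncated exponential series satisfies e^{−λ_R T} · Σ_{m=0}^{⌊λ_R t/2⌋} (λ_R T)^m / m! ≤ e^{−λ_R t / 8}. -/
/-!
Chernoff's argument: for `c ≥ 1` every term of `∑_{m ≤ k} μ^m/m!` is at most `c^k (μ/c)^m/m!`,
so the truncated series is at most `c^k e^{μ/c}`. With `c = 2` and `k ≤ λ_R t/2 ≤ λ_R T/2` this gives
`e^{-λ_R T} ∑_{m ≤ k} (λ_R T)^m/m! ≤ 2^k e^{-λ_R T/2} ≤ e^{-(1 - log 2) λ_R t/2}`, and `(1 - log 2)/2 > 1/8`.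
-/

open Real Finset
open scoped Nat

lemma sum_range_pow_div_factorial_le_pow_mul_exp {x c : ℝ} (hx : 0 ≤ x) (hc : 1 ≤ c) (k : ℕ) :
    ∑ m ∈ range (k + 1), x ^ m / m ! ≤ c ^ k * exp (x / c) := by
  have hc0 : 0 < c := by linarith
  calc ∑ m ∈ range (k + 1), x ^ m / m !
      = ∑ m ∈ range (k + 1), c ^ m * ((x / c) ^ m / m !) := by
        refine sum_congr rfl fun m _ => ?_
        rw [div_pow, mul_div_assoc', mul_div_cancel₀ _ (pow_ne_zero m hc0.ne')]
    _ ≤ ∑ m ∈ range (k + 1), c ^ k * ((x / c) ^ m / m !) := by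
        gcongr with m hm
        exact Nat.lt_succ_iff.mp (mem_range.mp hm)
    _ = c ^ k * ∑ m ∈ range (k + 1), (x / c) ^ m / m ! := (mul_sum ..).symm
    _ ≤ c ^ k * exp (x / c) := by
        gcongr
        exact sum_le_exp_of_nonneg (by positivity) _

lemma exp_neg_mul_sum_range_pow_div_factorial_le {μ : ℝ} (hμ : 0 ≤ μ) (k : ℕ) :
    exp (-μ) * ∑ m ∈ range (k + 1), μ ^ m / m ! ≤ exp (log 2 * k - μ / 2) :=
  calc exp (-μ) * ∑ m ∈ range (k + 1), μ ^ m / m !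
      ≤ exp (-μ) * (2 ^ k * exp (μ / 2)) := by
        gcongr
        exact sum_range_pow_div_factorial_le_pow_mul_exp hμ one_le_two k
    _ = exp (log 2 * k - μ / 2) := by
        rw [show log 2 * k - μ / 2 = log 2 * k + (-μ + μ / 2) by ring, exp_add, exp_add, exp_mul,
          exp_log two_pos, rpow_natCast]
        ring

/-- **Poisson lower-tail bound for the uniformized series (Lemma 2).**
For `0 < t ≤ T`, `e^{−λ_R T} Σ_{m=0}^{⌊λ_R t/2⌋} (λ_R T)^m/m! ≤ e^{−λ_R t/8}`. -/
theorem poisson_lower_tail_bound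
    (lamR t T : ℝ) (hlamR : 0 < lamR) (ht : 0 < t) (htT : t ≤ T) :
    Real.exp (-(lamR * T)) *
        ∑ m ∈ Finset.range (⌊lamR * t / 2⌋₊ + 1), (lamR * T) ^ m / (Nat.factorial m)
      ≤ Real.exp (-(lamR * t / 8)) := by
  have ha : 0 < lamR * t := mul_pos hlamR ht
  have haμ : lamR * t ≤ lamR * T := mul_le_mul_of_nonneg_left htT hlamR.le
  have hk : (⌊lamR * t / 2⌋₊ : ℝ) ≤ lamR * t / 2 := Nat.floor_le (by positivity)
  have hlog : log 2 ≤ 3 / 4 := by linarith [log_two_lt_d9]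
  have hlogk : log 2 * ⌊lamR * t / 2⌋₊ ≤ 3 / 4 * (lamR * t / 2) :=
    mul_le_mul hlog hk (Nat.cast_nonneg _) (by norm_num)
  refine (exp_neg_mul_sum_range_pow_div_factorial_le (ha.trans_le haμ).le _).trans ?_
  gcongr
  linarith
end

section
/- Stationary distribution of the birth-death chain is binomial (Lemma 5, part 1): Fix integers n ≥ 1, q ≥ 1 and reals 0 < γmin ≤ γmax, λ ≥ max(γmax, γmin + γmax/q), and let B be the (n+1)×(n+1) birth-death transition matrix on {0,...,n} with B_{i,i−1} = γmax·i/(nqλ), B_{i,i+1} = (γmin/λ)(1 − i/n), B_{i,i} = 1 − B_{i,i−1} − B_{i,i+1}. Set θ := q·γmin/γmax and define ν(x) := C(n,x)·θ^x/(1+θ)^n for x ∈ {0,...,n}, i.e., ν is the Binomial(n, θ/(1+θ)) = Binomial(n, q/(q+γ★)) distribution with γ★ := γmax/γmin. Then ν is a probability distribution satisfying the detailed balance equations ν(i)·B_{i,j} = ν(j)·B_{j,i} for all i, j, and hence ν is stationary for B: Σᵢ ν(i) B_{i,x} = ν(x) for all x. -/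
/-- The birth-death transition matrix `B` on `{0,…,n}` with
`B_{i,i−1} = γmax·i/(nqλ)`, `B_{i,i+1} = (γmin/λ)(1 − i/n)` and
`B_{i,i} = 1 − B_{i,i−1} − B_{i,i+1}`. -/
noncomputable def bdMatrix (n q : ℕ) (γmin γmax lam : ℝ) :
    Matrix (Fin (n + 1)) (Fin (n + 1)) ℝ :=
  Matrix.of fun i j =>
    if (j : ℕ) + 1 = (i : ℕ) then γmax * (i : ℕ) / ((n : ℝ) * q * lam)
    else if (i : ℕ) + 1 = (j : ℕ) then (γmin / lam) * (1 - (i : ℕ) / n)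
    else if i = j then
      1 - γmax * (i : ℕ) / ((n : ℝ) * q * lam) - (γmin / lam) * (1 - (i : ℕ) / n)
    else 0

/-!
Detailed balance for a birth-death chain only has to be checked between neighbours
`k` and `k + 1`. For the binomial weights `w k = C(n,k) θ^k` one has
`w (k+1) (k+1) = w k θ (n-k)`, and with `θ = q γmin / γmax` this is exactly the balance
`w (k+1) B_{k+1,k} = w k B_{k,k+1}`. Since the rows of `B` sum to one, detailed balance
gives stationarity, and the binomial theorem gives the normalisation.
-/

open Finset

theorem sum_mul_apply_eq_of_detailed_balance {ι R : Type*} [Fintype ι] [CommSemiring R]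
    {B : Matrix ι ι R} {ν : ι → R} (hrow : ∀ i, ∑ j, B i j = 1)
    (hdb : ∀ i j, ν i * B i j = ν j * B j i) (x : ι) :
    ∑ i, ν i * B i x = ν x := by
  simp_rw [hdb _ x, ← mul_sum, hrow, mul_one]

theorem Fin.sum_ite_val_eq {R : Type*} [AddCommMonoid R] (n m : ℕ) (c : R) :
    ∑ j : Fin n, (if (j : ℕ) = m then c else 0) = if m < n then c else 0 := by
  simp [Fin.sum_univ_eq_sum_range (fun j => if j = m then c else 0)]

section BirthDeath

variable {R : Type*} [CommRing R] {n : ℕ} {down up : ℕ → R}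

def birthDeathMatrix (n : ℕ) (down up : ℕ → R) : Matrix (Fin (n + 1)) (Fin (n + 1)) R :=
  Matrix.of fun i j =>
    if (j : ℕ) + 1 = i then down i
    else if (i : ℕ) + 1 = j then up i
    else if i = j then 1 - down i - up i
    else 0

theorem birthDeathMatrix_apply_of_succ_eq {i j : Fin (n + 1)} (h : (i : ℕ) + 1 = j) :
    birthDeathMatrix n down up i j = up i := by
  simp only [birthDeathMatrix, Matrix.of_apply, if_neg (show (j : ℕ) + 1 ≠ i by omega), h,
    if_true]

theorem birthDeathMatrix_apply_of_eq_succ {i j : Fin (n + 1)} (h : (j : ℕ) + 1 = i) :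
    birthDeathMatrix n down up i j = down i := by
  simp only [birthDeathMatrix, Matrix.of_apply, h, if_true]

theorem birthDeathMatrix_apply_of_not_adj {i j : Fin (n + 1)} (hij : (i : ℕ) + 1 ≠ j)
    (hji : (j : ℕ) + 1 ≠ i) (h : i ≠ j) : birthDeathMatrix n down up i j = 0 := by
  simp only [birthDeathMatrix, Matrix.of_apply, if_neg hij, if_neg hji, if_neg h]

theorem birthDeathMatrix_row_sum (hdown : down 0 = 0) (hup : up n = 0) (i : Fin (n + 1)) :
    ∑ j, birthDeathMatrix n down up i j = 1 := by
  -- `down 0 = 0` lets the "down" entry be indexed by the truncated `i - 1`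
  have hsplit : ∀ j : Fin (n + 1), birthDeathMatrix n down up i j =
      (if (j : ℕ) = i - 1 then down i else 0) + (if (j : ℕ) = i + 1 then up i else 0) +
        (if (j : ℕ) = i then 1 - down i - up i else 0) := by
    intro j
    simp only [birthDeathMatrix, Matrix.of_apply, Fin.ext_iff]
    split_ifs <;> first | omega | ring1 | (rw [show (i : ℕ) = 0 by omega, hdown]; ring1)
  simp only [hsplit, sum_add_distrib, Fin.sum_ite_val_eq]
  rcases Nat.lt_succ_iff_lt_or_eq.mp i.isLt with hi | hi
  · simp [hi, i.is_le, show (i : ℕ) - 1 < n + 1 by omega]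
  · simp [hi, hup]

theorem birthDeathMatrix_detailed_balance {ν : Fin (n + 1) → R}
    (hbal : ∀ i j : Fin (n + 1), (i : ℕ) + 1 = j → ν i * up i = ν j * down j)
    (i j : Fin (n + 1)) :
    ν i * birthDeathMatrix n down up i j = ν j * birthDeathMatrix n down up j i := by
  wlog hle : (i : ℕ) ≤ j generalizing i j
  · exact (this j i (by omega)).symm
  rcases eq_or_ne i j with rfl | hne
  · rfl
  by_cases hadj : (i : ℕ) + 1 = j
  · rw [birthDeathMatrix_apply_of_succ_eq hadj, birthDeathMatrix_apply_of_eq_succ hadj,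
      hbal i j hadj]
  · rw [birthDeathMatrix_apply_of_not_adj hadj (by omega) hne,
      birthDeathMatrix_apply_of_not_adj (by omega) hadj hne.symm, mul_zero, mul_zero]

end BirthDeath

theorem choose_succ_mul_pow_succ {R : Type*} [CommRing R] {n k : ℕ} (hk : k ≤ n) (θ : R) :
    (n.choose (k + 1) : R) * θ ^ (k + 1) * (k + 1) = n.choose k * θ ^ k * (θ * (n - k)) := by
  have h : (n.choose (k + 1) : R) * (k + 1) = n.choose k * (n - k) := by
    have := congrArg (Nat.cast (R := R)) (Nat.choose_succ_right_eq n k)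
    push_cast [hk] at this
    exact this
  linear_combination θ ^ k * θ * h

theorem sum_choose_mul_pow_div_one_add_pow {K : Type*} [Field K] (n : ℕ) {θ : K}
    (hθ : 1 + θ ≠ 0) :
    ∑ x : Fin (n + 1), (n.choose x : K) * θ ^ (x : ℕ) / (1 + θ) ^ n = 1 := by
  rw [← sum_div, div_eq_one_iff_eq (pow_ne_zero n hθ),
    Fin.sum_univ_eq_sum_range (fun k => (n.choose k : K) * θ ^ k), add_comm 1 θ, add_pow]
  exact sum_congr rfl fun k _ => by ring

theorem bdMatrix_eq_birthDeathMatrix (n q : ℕ) (γmin γmax lam : ℝ) :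
    bdMatrix n q γmin γmax lam = birthDeathMatrix n (fun k => γmax * k / ((n : ℝ) * q * lam))
      (fun k => γmin / lam * (1 - k / n)) :=
  rfl

theorem bdMatrix_binomial_balance {n q k : ℕ} (hk : k < n) (hq : q ≠ 0) {γmin γmax lam : ℝ}
    (hγmax : γmax ≠ 0) :
    (n.choose k : ℝ) * (q * γmin / γmax) ^ k * (γmin / lam * (1 - k / n)) =
      (n.choose (k + 1) : ℝ) * (q * γmin / γmax) ^ (k + 1) *
        (γmax * (k + 1 : ℕ) / ((n : ℝ) * q * lam)) := by
  have hn : (n : ℝ) ≠ 0 := Nat.cast_ne_zero.mpr (by omega)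
  calc _ = (n.choose k : ℝ) * (q * γmin / γmax) ^ k * ((q * γmin / γmax) * (n - k))
        * (γmax / (n * q * lam)) := by field_simp
    _ = _ := by rw [← choose_succ_mul_pow_succ hk.le]; push_cast; ring

theorem bd_stationary_binomial_general
    (n q : ℕ) (hn : 1 ≤ n) (hq : 1 ≤ q)
    (γmin γmax lam : ℝ)
    (hγmin : 0 < γmin) (hγ : γmin ≤ γmax)
    (θ : ℝ) (hθ : θ = q * γmin / γmax)
    (ν : Fin (n + 1) → ℝ)
    (hν : ∀ x : Fin (n + 1), ν x = (n.choose (x : ℕ) : ℝ) * θ ^ (x : ℕ) / (1 + θ) ^ n) :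
    (∀ x, 0 ≤ ν x) ∧ (∑ x, ν x = 1)
    ∧ (∀ i j, ν i * bdMatrix n q γmin γmax lam i j = ν j * bdMatrix n q γmin γmax lam j i)
    ∧ (∀ x, ∑ i, ν i * bdMatrix n q γmin γmax lam i x = ν x) := by
  have hγmax : 0 < γmax := hγmin.trans_le hγ
  have hθ0 : 0 ≤ θ := hθ ▸ by positivity
  have hdb : ∀ i j,
      ν i * bdMatrix n q γmin γmax lam i j = ν j * bdMatrix n q γmin γmax lam j i := by
    rw [bdMatrix_eq_birthDeathMatrix]
    refine birthDeathMatrix_detailed_balance fun i j hij => ?_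
    rw [hν, hν, div_mul_eq_mul_div _ ((1 + θ) ^ n), div_mul_eq_mul_div _ ((1 + θ) ^ n), ← hij,
      hθ, bdMatrix_binomial_balance (by omega) (by omega) hγmax.ne']
  have hrow : ∀ i, ∑ j, bdMatrix n q γmin γmax lam i j = 1 := by
    rw [bdMatrix_eq_birthDeathMatrix]
    exact birthDeathMatrix_row_sum (by simp) (by simp [show (n : ℝ) ≠ 0 by positivity])
  refine ⟨fun x => by rw [hν x]; positivity, ?_, hdb,
    sum_mul_apply_eq_of_detailed_balance hrow hdb⟩
  simp_rw [hν]
  exact sum_choose_mul_pow_div_one_add_pow n (by positivity)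

/-- **Stationary distribution of the birth-death chain is binomial (Lemma 5, part 1).**
With `θ = qγmin/γmax`, the distribution `ν(x) = C(n,x) θ^x/(1+θ)^n` (Binomial(n, θ/(1+θ)))
is a probability distribution satisfying detailed balance for `B`, hence is stationary. -/
theorem bd_stationary_binomial
    (n q : ℕ) (hn : 1 ≤ n) (hq : 1 ≤ q)
    (γmin γmax lam : ℝ)
    (hγmin : 0 < γmin) (hγ : γmin ≤ γmax)
    (hlam : max γmax (γmin + γmax / (q : ℝ)) ≤ lam)
    (θ : ℝ) (hθ : θ = q * γmin / γmax)
    (ν : Fin (n + 1) → ℝ)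
    (hν : ∀ x : Fin (n + 1), ν x = (n.choose (x : ℕ) : ℝ) * θ ^ (x : ℕ) / (1 + θ) ^ n) :
    (∀ x, 0 ≤ ν x) ∧ (∑ x, ν x = 1)
    ∧ (∀ i j, ν i * bdMatrix n q γmin γmax lam i j = ν j * bdMatrix n q γmin γmax lam j i)
    ∧ (∀ x, ∑ i, ν i * bdMatrix n q γmin γmax lam i x = ν x) :=
  bd_stationary_binomial_general n q hn hq γmin γmax lam hγmin hγ θ hθ ν hν
end

section
/- Minimum of the stationary distribution (Lemma 5, part 2): With B, θ = q·γmin/γmax, γ★ = γmax/γmin, and ν(x) = C(n,x)·θ^x/(1+θ)^n as above, the minimum of ν over {0,...,n} is attained at an endpoint and equals min(1, θ^n)/(1+θ)^n = min(γ★^n, q^n)/(γ★ + q)^n. -/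
/-!
Every binomial coefficient `C(n, x)` is at least `1`, and for `θ ≥ 0` the power `θ ^ x` with
`x ≤ n` lies between `θ ^ 0 = 1` and `θ ^ n`, so the numerator `C(n, x) θ ^ x` of `ν x` is at
least `min 1 (θ ^ n)`; this bound is attained at `x = 0` or `x = n`, where `C(n, x) = 1`.
Multiplying numerator and denominator by `γ★ ^ n` and using `θ = q / γ★` gives the second form.
-/

lemma min_one_pow_le_pow {θ : ℝ} (hθ : 0 ≤ θ) {x n : ℕ} (hx : x ≤ n) :
    min 1 (θ ^ n) ≤ θ ^ x := by
  rcases le_total θ 1 with h | h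
  · exact (min_le_right _ _).trans (pow_le_pow_of_le_one hθ h hx)
  · exact (min_le_left _ _).trans (one_le_pow₀ h)

lemma min_one_pow_le_choose_mul_pow {θ : ℝ} (hθ : 0 ≤ θ) {x n : ℕ} (hx : x ≤ n) :
    min 1 (θ ^ n) ≤ n.choose x * θ ^ x := by
  have hchoose : (1 : ℝ) ≤ n.choose x := by exact_mod_cast Nat.choose_pos hx
  calc min 1 (θ ^ n) ≤ θ ^ x := min_one_pow_le_pow hθ hx
    _ ≤ n.choose x * θ ^ x := le_mul_of_one_le_left (pow_nonneg hθ x) hchoose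

lemma min_one_pow_div_one_add_pow {γ : ℝ} (hγ : 0 < γ) (q : ℝ) (n : ℕ) :
    min 1 ((q / γ) ^ n) / (1 + q / γ) ^ n = min (γ ^ n) (q ^ n) / (γ + q) ^ n := by
  have hγn : γ ^ n ≠ 0 := pow_ne_zero n hγ.ne'
  rw [← mul_div_mul_left _ _ hγn, mul_min_of_nonneg _ _ (pow_nonneg hγ.le n), ← mul_pow,
    ← mul_pow, mul_one, mul_div_cancel₀ _ hγ.ne', mul_add, mul_one, mul_div_cancel₀ _ hγ.ne']

theorem bd_stationary_min_general
    (n q : ℕ)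
    (γmin γmax : ℝ)
    (hγmin : 0 < γmin) (hγ : γmin ≤ γmax)
    (θ γstar : ℝ) (hθ : θ = q * γmin / γmax) (hγstar : γstar = γmax / γmin)
    (ν : Fin (n + 1) → ℝ)
    (hν : ∀ x : Fin (n + 1), ν x = (n.choose (x : ℕ) : ℝ) * θ ^ (x : ℕ) / (1 + θ) ^ n) :
    (∀ x, min 1 (θ ^ n) / (1 + θ) ^ n ≤ ν x)
    ∧ (ν 0 = min 1 (θ ^ n) / (1 + θ) ^ n ∨ ν (Fin.last n) = min 1 (θ ^ n) / (1 + θ) ^ n)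
    ∧ min 1 (θ ^ n) / (1 + θ) ^ n = min (γstar ^ n) ((q : ℝ) ^ n) / (γstar + q) ^ n := by
  have hγmax : 0 < γmax := hγmin.trans_le hγ
  have hθ_nonneg : 0 ≤ θ := hθ ▸ by positivity
  have hθ_eq : θ = q / γstar := by rw [hθ, hγstar]; field_simp
  refine ⟨fun x => ?_, ?_, ?_⟩
  · rw [hν]
    exact div_le_div_of_nonneg_right (min_one_pow_le_choose_mul_pow hθ_nonneg x.is_le)
      (by positivity)
  · rcases min_choice 1 (θ ^ n) with h | h <;> simp [hν, h]
  · rw [hθ_eq]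
    exact min_one_pow_div_one_add_pow (hγstar ▸ by positivity) q n

/-- **Minimum of the stationary distribution (Lemma 5, part 2).**
With `θ = qγmin/γmax`, `γ★ = γmax/γmin` and `ν(x) = C(n,x)θ^x/(1+θ)^n`, the minimum of
`ν` over `{0,…,n}` is attained at an endpoint and equals
`min(1,θ^n)/(1+θ)^n = min(γ★^n, q^n)/(γ★+q)^n`. -/
theorem bd_stationary_min
    (n q : ℕ) (hn : 1 ≤ n) (hq : 1 ≤ q)
    (γmin γmax : ℝ)
    (hγmin : 0 < γmin) (hγ : γmin ≤ γmax)
    (θ γstar : ℝ) (hθ : θ = q * γmin / γmax) (hγstar : γstar = γmax / γmin)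
    (ν : Fin (n + 1) → ℝ)
    (hν : ∀ x : Fin (n + 1), ν x = (n.choose (x : ℕ) : ℝ) * θ ^ (x : ℕ) / (1 + θ) ^ n) :
    (∀ x, min 1 (θ ^ n) / (1 + θ) ^ n ≤ ν x)
    ∧ (ν 0 = min 1 (θ ^ n) / (1 + θ) ^ n ∨ ν (Fin.last n) = min 1 (θ ^ n) / (1 + θ) ^ n)
    ∧ min 1 (θ ^ n) / (1 + θ) ^ n = min (γstar ^ n) ((q : ℝ) ^ n) / (γstar + q) ^ n :=
  bd_stationary_min_general n q γmin γmax hγmin hγ θ γstar hθ hγstar ν hν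
end

section
/- Stationary distribution ratio bound (Lemma 6): With θ = q·γmin/γmax, γ★ = γmax/γmin, and ν(x) = C(n,x)·θ^x/(1+θ)^n the Binomial(n, θ/(1+θ)) distribution on {0,...,n}, suppose 0 < δ ≤ q/(q + e·γ★), set r★ := ⌊nδ⌋, and let r be an integer with 0 ≤ r ≤ ⌊nδ⌋/2. Then ν(r)/ν(r★) ≤ exp(−nδ/2 + 1). -/
/-!
Consecutive binomial weights `w x = C(n,x) θ^x` have ratio `w (x+1) / w x = (n - x) θ / (x + 1)`.
Since `q / (q + e γ★) = θ / (θ + e)`, the hypothesis on `δ` says exactly `e δ ≤ (1 - δ) θ`, so for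
`x < ⌊nδ⌋ ≤ nδ` this ratio is at least `e`. The normalisation `(1 + θ)^n` cancels, hence
`ν r / ν ⌊nδ⌋ ≤ exp (-(⌊nδ⌋ - r))`, and `⌊nδ⌋ - r ≥ ⌊nδ⌋ / 2 > (nδ - 1) / 2`.
-/

open Real

theorem pow_sub_mul_le_of_forall_mul_le_succ {f : ℕ → ℝ} {c : ℝ} {k m : ℕ} (hc : 0 ≤ c)
    (hkm : k ≤ m) (h : ∀ x, k ≤ x → x < m → c * f x ≤ f (x + 1)) : c ^ (m - k) * f k ≤ f m := by
  induction m, hkm using Nat.le_induction with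
  | base => simp
  | succ m hkm ih =>
    calc c ^ (m + 1 - k) * f k = c * (c ^ (m - k) * f k) := by
          rw [Nat.sub_add_comm hkm, pow_succ]; ring
      _ ≤ c * f m := mul_le_mul_of_nonneg_left (ih fun x hx hxm => h x hx (by omega)) hc
      _ ≤ f (m + 1) := h m hkm (by omega)

theorem mul_choose_mul_pow_le_succ {n x : ℕ} {θ a : ℝ} (hθ : 0 ≤ θ)
    (h : a * (x + 1) ≤ (n - x) * θ) :
    a * (n.choose x * θ ^ x) ≤ n.choose (x + 1) * θ ^ (x + 1) := by
  rcases lt_or_ge n x with hnx | hxn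
  · simp [Nat.choose_eq_zero_of_lt hnx, Nat.choose_eq_zero_of_lt (hnx.trans (Nat.lt_succ_self x))]
  have hchoose : (n.choose (x + 1) : ℝ) * (x + 1) = n.choose x * (n - x) := by
    have := congrArg (Nat.cast : ℕ → ℝ) (Nat.choose_succ_right_eq n x)
    push_cast [Nat.cast_sub hxn] at this
    exact this
  refine le_of_mul_le_mul_right ?_ (by positivity : (0 : ℝ) < x + 1)
  calc a * (n.choose x * θ ^ x) * (x + 1) = n.choose x * θ ^ x * (a * (x + 1)) := by ring
    _ ≤ n.choose x * θ ^ x * ((n - x) * θ) := by gcongr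
    _ = n.choose (x + 1) * θ ^ (x + 1) * (x + 1) := by
      rw [pow_succ]; linear_combination -θ ^ x * θ * hchoose

theorem choose_mul_pow_div_le_exp {n k m : ℕ} {θ δ : ℝ} (hθ : 0 < θ)
    (hδ : exp 1 * δ ≤ (1 - δ) * θ) (hkm : k ≤ m) (hm : (m : ℝ) ≤ n * δ) :
    n.choose k * θ ^ k / (n.choose m * θ ^ m) ≤ exp (-(m - k : ℝ)) := by
  have hδ1 : δ < 1 := by nlinarith [exp_pos 1]
  have hmn : m ≤ n := by
    have : (n : ℝ) * δ ≤ n := mul_le_of_le_one_right n.cast_nonneg hδ1.le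
    exact_mod_cast hm.trans this
  have hgrowth := pow_sub_mul_le_of_forall_mul_le_succ (f := fun x => n.choose x * θ ^ x)
    (exp_pos 1).le hkm fun x _ hxm => mul_choose_mul_pow_le_succ hθ.le <| by
      have : (x : ℝ) + 1 ≤ m := by exact_mod_cast hxm
      nlinarith [exp_pos 1]
  have hwm : (0 : ℝ) < n.choose m * θ ^ m := by
    have := Nat.choose_pos hmn
    positivity
  rw [div_le_iff₀ hwm]
  calc (n.choose k : ℝ) * θ ^ k
        = exp (-(m - k : ℝ)) * (exp 1 ^ (m - k) * (n.choose k * θ ^ k)) := by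
        rw [exp_one_pow, Nat.cast_sub hkm, ← mul_assoc, ← exp_add, neg_add_cancel, exp_zero, one_mul]
    _ ≤ exp (-(m - k : ℝ)) * (n.choose m * θ ^ m) := by gcongr

theorem stationary_ratio_bound_general
    (n q : ℕ)
    (γmin γmax δ : ℝ)
    (hγmin : 0 < γmin) (hγ : γmin ≤ γmax)
    (θ γstar : ℝ) (hθ : θ = q * γmin / γmax) (hγstar : γstar = γmax / γmin)
    (hδ0 : 0 < δ) (hδ : δ ≤ (q : ℝ) / (q + Real.exp 1 * γstar))
    (r : ℕ) (hr : (r : ℝ) ≤ (⌊(n : ℝ) * δ⌋₊ : ℝ) / 2)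
    (ν : ℕ → ℝ)
    (hν : ∀ x : ℕ, ν x = (n.choose x : ℝ) * θ ^ x / (1 + θ) ^ n) :
    ν r / ν ⌊(n : ℝ) * δ⌋₊ ≤ Real.exp (-((n : ℝ) * δ / 2) + 1) := by
  set R := ⌊(n : ℝ) * δ⌋₊
  have hγmax : 0 < γmax := hγmin.trans_le hγ
  have hθ0 : 0 ≤ θ := hθ ▸ by positivity
  have hδθ : δ ≤ θ / (θ + exp 1) := by
    convert hδ using 1
    rw [hθ, hγstar]
    field_simp
  have hkey : exp 1 * δ ≤ (1 - δ) * θ := by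
    have := (le_div_iff₀ (by positivity)).mp hδθ
    linarith
  have hθpos : 0 < θ := by nlinarith [exp_pos 1]
  have hRδ : (R : ℝ) ≤ n * δ := Nat.floor_le (by positivity)
  have hRδ' : (n : ℝ) * δ < R + 1 := Nat.lt_floor_add_one _
  have hrR : r ≤ R := by exact_mod_cast hr.trans (half_le_self R.cast_nonneg)
  rw [hν, hν, div_div_div_cancel_right₀ (by positivity)]
  refine (choose_mul_pow_div_le_exp hθpos hkey hrR hRδ).trans (exp_le_exp.mpr ?_)
  linarith

/-- **Stationary distribution ratio bound (Lemma 6).**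
With `θ = qγmin/γmax`, `γ★ = γmax/γmin` and `ν(x) = C(n,x)θ^x/(1+θ)^n`, if
`0 < δ ≤ q/(q + e γ★)`, `nδ ≥ 1`, `r★ = ⌊nδ⌋` and `0 ≤ r ≤ ⌊nδ⌋/2`, then
`ν(r)/ν(r★) ≤ exp(−nδ/2 + 1)`. -/
theorem stationary_ratio_bound
    (n q : ℕ) (hn : 1 ≤ n) (hq : 1 ≤ q)
    (γmin γmax δ : ℝ)
    (hγmin : 0 < γmin) (hγ : γmin ≤ γmax)
    (θ γstar : ℝ) (hθ : θ = q * γmin / γmax) (hγstar : γstar = γmax / γmin)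
    (hδ0 : 0 < δ) (hδ : δ ≤ (q : ℝ) / (q + Real.exp 1 * γstar))
    (hnδ : 1 ≤ (n : ℝ) * δ)
    (r : ℕ) (hr : (r : ℝ) ≤ (⌊(n : ℝ) * δ⌋₊ : ℝ) / 2)
    (ν : ℕ → ℝ)
    (hν : ∀ x : ℕ, ν x = (n.choose x : ℝ) * θ ^ x / (1 + θ) ^ n) :
    ν r / ν ⌊(n : ℝ) * δ⌋₊ ≤ Real.exp (-((n : ℝ) * δ / 2) + 1) :=
  stationary_ratio_bound_general n q γmin γmax δ hγmin hγ θ γstar hθ hγstar hδ0 hδ r hr ν hν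
end

section
/- Spectral gap lower bound for the birth-death chain (Lemma 9): Fix integers n ≥ 1, q ≥ 1 and reals 0 < γmin ≤ γmax, λ ≥ max(γmax, γmin + γmax/q), and let B be the (n+1)×(n+1) birth-death transition matrix on {0,...,n} with B_{i,i−1} = γmax·i/(nqλ), B_{i,i+1} = (γmin/λ)(1 − i/n), B_{i,i} = 1 − B_{i,i−1} − B_{i,i+1}. B is reversible with respect to its binomial stationary distribution ν, so all eigenvalues of B are real; let λ₂ denote the second largest eigenvalue of B. Then the spectral gap satisfies 1 − λ₂ ≥ min(γmax/q, γmin) / (λ · n²·(n+1)²). -/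
open Finset

section BirthDeath

variable {n : ℕ} {π up down V : ℕ → ℝ}

/-- `(I - B) V` for the birth-death chain with birth rates `up` and death rates `down`;
at `i = 0` the death term vanishes because `0 - 1 = 0` in `ℕ`. -/
def bdLaplacian (up down V : ℕ → ℝ) (i : ℕ) : ℝ :=
  down i * (V i - V (i - 1)) + up i * (V i - V (i + 1))

theorem sum_mul_bdLaplacian (hbal : ∀ k < n, π k * up k = π (k + 1) * down (k + 1))
    (hup : up n = 0) (f : ℕ → ℝ) :
    ∑ i ∈ range (n + 1), π i * f i * bdLaplacian up down V i =
      ∑ k ∈ range n, π k * up k * (V (k + 1) - V k) * (f (k + 1) - f k) := by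
  have hdown : ∑ i ∈ range (n + 1), π i * f i * (down i * (V i - V (i - 1))) =
      ∑ k ∈ range n, π k * up k * (V (k + 1) - V k) * f (k + 1) := by
    rw [sum_range_succ', Nat.zero_sub, sub_self, mul_zero, mul_zero, add_zero]
    refine sum_congr rfl fun k hk => ?_
    rw [Nat.add_sub_cancel, hbal k (mem_range.mp hk)]
    ring
  have hup' : ∑ i ∈ range (n + 1), π i * f i * (up i * (V i - V (i + 1))) =
      ∑ k ∈ range n, π k * up k * (V k - V (k + 1)) * f k := by
    rw [sum_range_succ, hup, zero_mul, mul_zero, add_zero]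
    exact sum_congr rfl fun k _ => by ring
  simp only [bdLaplacian, mul_add]
  rw [sum_add_distrib, hdown, hup', ← sum_add_distrib]
  exact sum_congr rfl fun k _ => by ring

variable {ν : ℝ}

theorem sum_mul_eq_zero_of_bdLaplacian_eq (hbal : ∀ k < n, π k * up k = π (k + 1) * down (k + 1))
    (hup : up n = 0) (hV : ∀ i ≤ n, bdLaplacian up down V i = ν * V i) (hν : ν ≠ 0) :
    ∑ i ∈ range (n + 1), π i * V i = 0 := by
  have h := sum_mul_bdLaplacian (V := V) hbal hup fun _ => 1
  simp only [sub_self, mul_zero, sum_const_zero] at h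
  rw [sum_congr rfl fun i hi => by rw [hV i (Nat.lt_succ_iff.mp (mem_range.mp hi))]] at h
  simp_rw [mul_one, mul_left_comm _ ν, ← mul_sum] at h
  exact (mul_eq_zero.mp h).resolve_left hν

theorem mul_sum_sq_eq_of_bdLaplacian_eq (hbal : ∀ k < n, π k * up k = π (k + 1) * down (k + 1))
    (hup : up n = 0) (hV : ∀ i ≤ n, bdLaplacian up down V i = ν * V i) :
    ν * ∑ i ∈ range (n + 1), π i * V i ^ 2 =
      ∑ k ∈ range n, π k * up k * (V (k + 1) - V k) ^ 2 := by
  have h := sum_mul_bdLaplacian (V := V) hbal hup V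
  rw [sum_congr rfl fun i hi => by rw [hV i (Nat.lt_succ_iff.mp (mem_range.mp hi))]] at h
  rw [mul_sum]
  convert h using 2 with i _ k _ <;> ring

end BirthDeath

section Poincare

theorem sum_sum_mul_sq_sub_eq {ι : Type*} (s : Finset ι) (π V : ι → ℝ)
    (hmean : ∑ i ∈ s, π i * V i = 0) :
    ∑ i ∈ s, ∑ j ∈ s, π i * π j * (V j - V i) ^ 2 =
      2 * (∑ i ∈ s, π i) * ∑ i ∈ s, π i * V i ^ 2 := by
  calc ∑ i ∈ s, ∑ j ∈ s, π i * π j * (V j - V i) ^ 2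
      = ∑ i ∈ s, ∑ j ∈ s,
          (π i * (π j * V j ^ 2) - 2 * (π i * V i) * (π j * V j) + π i * V i ^ 2 * π j) :=
        sum_congr rfl fun i _ => sum_congr rfl fun j _ => by ring
    _ = (∑ i ∈ s, π i) * (∑ j ∈ s, π j * V j ^ 2)
          - 2 * (∑ i ∈ s, π i * V i) * (∑ j ∈ s, π j * V j)
          + (∑ i ∈ s, π i * V i ^ 2) * ∑ j ∈ s, π j := by
        simp only [sum_add_distrib, sum_sub_distrib, ← mul_sum, ← sum_mul]
    _ = 2 * (∑ i ∈ s, π i) * ∑ i ∈ s, π i * V i ^ 2 := by rw [hmean]; ring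

theorem sum_sum_eq_two_mul_sum_sum_lt {ι : Type*} [LinearOrder ι] (s : Finset ι)
    (f : ι → ι → ℝ) (hsymm : ∀ i j, f i j = f j i) (hdiag : ∀ i, f i i = 0) :
    ∑ i ∈ s, ∑ j ∈ s, f i j = 2 * ∑ i ∈ s, ∑ j ∈ s, if i < j then f i j else 0 := by
  have hsplit : ∀ i j, f i j = (if i < j then f i j else 0) + (if j < i then f j i else 0) := by
    intro i j
    rcases lt_trichotomy i j with h | rfl | h
    · simp [h, h.not_gt]
    · simp [hdiag]
    · simp [h, h.not_gt, hsymm i j]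
  simp_rw [sum_congr rfl fun i _ => sum_congr rfl fun j _ => hsplit i j, sum_add_distrib]
  rw [sum_comm (f := fun i j => if j < i then f j i else 0)]
  ring

theorem sq_sub_le_card_mul_sum_Ico (V : ℕ → ℝ) {i j : ℕ} (hij : i ≤ j) :
    (V j - V i) ^ 2 ≤ (j - i : ℕ) * ∑ k ∈ Ico i j, (V (k + 1) - V k) ^ 2 := by
  rw [← sum_Ico_sub V hij, ← Nat.card_Ico]
  exact sq_sum_le_card_mul_sum_sq

variable {n : ℕ} {π V : ℕ → ℝ}

theorem sum_sum_ite_mul_eq {k : ℕ} (hk : k ≤ n) :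
    ∑ i ∈ range (n + 1), ∑ j ∈ range (n + 1), (if i ≤ k ∧ k < j then π i * π j else 0) =
      (∑ i ∈ range (k + 1), π i) * ∑ j ∈ Ioc k n, π j := by
  have hA : range (k + 1) = (range (n + 1)).filter (· ≤ k) := by ext; simp; omega
  have hB : Ioc k n = (range (n + 1)).filter (k < ·) := by ext; simp; omega
  rw [hA, hB, sum_filter, sum_filter, sum_mul_sum]
  exact sum_congr rfl fun i _ => sum_congr rfl fun j _ => by split_ifs <;> simp_all

theorem mul_sq_sub_le_sum_ite {i j : ℕ} (hπ : ∀ i, 0 ≤ π i) (hij : i ≤ j) (hj : j ≤ n) :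
    π i * π j * (V j - V i) ^ 2 ≤
      n * ∑ k ∈ range n, (if i ≤ k ∧ k < j then π i * π j else 0) * (V (k + 1) - V k) ^ 2 := by
  have hIco : Ico i j = (range n).filter (fun k => i ≤ k ∧ k < j) := by ext; simp; omega
  have hpath : ∑ k ∈ range n,
      (if i ≤ k ∧ k < j then π i * π j else 0) * (V (k + 1) - V k) ^ 2 =
      π i * π j * ∑ k ∈ Ico i j, (V (k + 1) - V k) ^ 2 := by
    rw [hIco, sum_filter, mul_sum]
    exact sum_congr rfl fun k _ => by split_ifs <;> ring
  rw [hpath, mul_left_comm]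
  refine mul_le_mul_of_nonneg_left ((sq_sub_le_card_mul_sum_Ico V hij).trans ?_)
    (mul_nonneg (hπ i) (hπ j))
  gcongr
  omega

/-- Canonical paths: the pair `(i, j)` is routed through the edges `k → k + 1` with
`i ≤ k < j`, so edge `k` carries the weight of the cut it separates. -/
theorem sum_sum_mul_sq_sub_le (hπ : ∀ i, 0 ≤ π i) :
    ∑ i ∈ range (n + 1), ∑ j ∈ range (n + 1), π i * π j * (V j - V i) ^ 2 ≤
      2 * n * ∑ k ∈ range n,
        (∑ i ∈ range (k + 1), π i) * (∑ j ∈ Ioc k n, π j) * (V (k + 1) - V k) ^ 2 := by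
  set R := range (n + 1)
  set cut := fun i j k => if i ≤ k ∧ k < j then π i * π j else 0
  have hpair : ∀ i ∈ R, ∀ j ∈ R, (if i < j then π i * π j * (V j - V i) ^ 2 else 0) ≤
      n * ∑ k ∈ range n, cut i j k * (V (k + 1) - V k) ^ 2 := by
    intro i _ j hj
    split_ifs with hij
    · exact mul_sq_sub_le_sum_ite hπ hij.le (Nat.lt_succ_iff.mp (mem_range.mp hj))
    · have hcut : ∀ k, cut i j k = 0 := fun k => if_neg (by omega)
      simp [hcut]
  rw [sum_sum_eq_two_mul_sum_sum_lt _ _ (fun i j => by ring) (fun i => by simp), mul_assoc]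
  gcongr 2 * ?_
  calc ∑ i ∈ R, ∑ j ∈ R, (if i < j then π i * π j * (V j - V i) ^ 2 else 0)
      ≤ ∑ i ∈ R, ∑ j ∈ R, n * ∑ k ∈ range n, cut i j k * (V (k + 1) - V k) ^ 2 :=
        sum_le_sum fun i hi => sum_le_sum fun j hj => hpair i hi j hj
    _ = n * ∑ k ∈ range n, (∑ i ∈ R, ∑ j ∈ R, cut i j k) * (V (k + 1) - V k) ^ 2 := by
        simp only [← mul_sum, sum_mul]
        exact congr_arg _ ((sum_congr rfl fun i _ => sum_comm).trans sum_comm)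
    _ = _ := by
        rw [sum_congr rfl fun k hk => by rw [sum_sum_ite_mul_eq (mem_range.mp hk).le]]

theorem sum_range_mul_sum_Ioc_le {k : ℕ} (hπ : ∀ i, 0 ≤ π i) (hk : k ≤ n)
    (hmode : MonotoneOn π (Set.Iic k) ∨ AntitoneOn π (Set.Ici (k + 1))) :
    (∑ i ∈ range (k + 1), π i) * (∑ j ∈ Ioc k n, π j) ≤
      (n + 1) * (∑ i ∈ range (n + 1), π i) * max (π k) (π (k + 1)) := by
  have hA : ∑ i ∈ range (k + 1), π i ≤ ∑ i ∈ range (n + 1), π i :=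
    sum_le_sum_of_subset_of_nonneg (range_subset_range.mpr (by omega)) fun i _ _ => hπ i
  have hB : ∑ j ∈ Ioc k n, π j ≤ ∑ i ∈ range (n + 1), π i :=
    sum_le_sum_of_subset_of_nonneg (fun j hj => by simp at hj ⊢; omega) fun i _ _ => hπ i
  have hA0 : 0 ≤ ∑ i ∈ range (k + 1), π i := sum_nonneg fun i _ => hπ i
  have hB0 : 0 ≤ ∑ j ∈ Ioc k n, π j := sum_nonneg fun i _ => hπ i
  have hmax : 0 ≤ max (π k) (π (k + 1)) := (hπ k).trans (le_max_left _ _)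
  rcases hmode with hmono | hanti
  · have hA' : ∑ i ∈ range (k + 1), π i ≤ (n + 1) * max (π k) (π (k + 1)) := by
      refine (sum_le_card_nsmul _ _ (π k) fun i hi => hmono (by simp at hi ⊢; omega)
        (Set.mem_Iic.mpr le_rfl) (by simp at hi ⊢; omega)).trans ?_
      rw [card_range, nsmul_eq_mul]
      exact mul_le_mul (by exact_mod_cast (by omega : k + 1 ≤ n + 1)) (le_max_left _ _)
        (hπ k) (by positivity)
    nlinarith
  · have hB' : ∑ j ∈ Ioc k n, π j ≤ (n + 1) * max (π k) (π (k + 1)) := by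
      refine (sum_le_card_nsmul _ _ (π (k + 1)) fun j hj => hanti (Set.mem_Ici.mpr le_rfl)
        (by simp at hj ⊢; omega) (by simp at hj ⊢; omega)).trans ?_
      rw [Nat.card_Ioc, nsmul_eq_mul]
      exact mul_le_mul (by exact_mod_cast (by omega : n - k ≤ n + 1)) (le_max_right _ _)
        (hπ (k + 1)) (by positivity)
    nlinarith

theorem poincare_of_unimodal {up down : ℕ → ℝ} {c : ℝ} (hπ : ∀ i, 0 ≤ π i)
    (hπsum : 0 < ∑ i ∈ range (n + 1), π i)
    (hmode : ∀ k, MonotoneOn π (Set.Iic k) ∨ AntitoneOn π (Set.Ici (k + 1)))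
    (hc : 0 ≤ c) (hup : ∀ k < n, c ≤ up k) (hdown : ∀ k < n, c ≤ down (k + 1))
    (hbal : ∀ k < n, π k * up k = π (k + 1) * down (k + 1))
    (hmean : ∑ i ∈ range (n + 1), π i * V i = 0) :
    c * ∑ i ∈ range (n + 1), π i * V i ^ 2 ≤
      n * (n + 1) * ∑ k ∈ range n, π k * up k * (V (k + 1) - V k) ^ 2 := by
  set W := ∑ i ∈ range (n + 1), π i
  have hedge : ∀ k < n, c * max (π k) (π (k + 1)) ≤ π k * up k := by
    intro k hk
    rw [mul_max_of_nonneg _ _ hc]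
    refine max_le ?_ ?_
    · rw [mul_comm]; exact mul_le_mul_of_nonneg_left (hup k hk) (hπ k)
    · rw [hbal k hk, mul_comm]; exact mul_le_mul_of_nonneg_left (hdown k hk) (hπ (k + 1))
  have hcut : ∀ k ∈ range n,
      (∑ i ∈ range (k + 1), π i) * (∑ j ∈ Ioc k n, π j) * (V (k + 1) - V k) ^ 2 ≤
        (n + 1) * W * (max (π k) (π (k + 1)) * (V (k + 1) - V k) ^ 2) := fun k hk => by
    rw [← mul_assoc]
    exact mul_le_mul_of_nonneg_right
      (sum_range_mul_sum_Ioc_le hπ (mem_range.mp hk).le (hmode k)) (sq_nonneg _)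
  suffices 2 * W * (c * ∑ i ∈ range (n + 1), π i * V i ^ 2) ≤
      2 * W * (n * (n + 1) * ∑ k ∈ range n, π k * up k * (V (k + 1) - V k) ^ 2) from
    le_of_mul_le_mul_left this (by positivity)
  calc 2 * W * (c * ∑ i ∈ range (n + 1), π i * V i ^ 2)
      = c * ∑ i ∈ range (n + 1), ∑ j ∈ range (n + 1), π i * π j * (V j - V i) ^ 2 := by
        rw [sum_sum_mul_sq_sub_eq _ _ _ hmean]; ring
    _ ≤ c * (2 * n * ∑ k ∈ range n,
          (∑ i ∈ range (k + 1), π i) * (∑ j ∈ Ioc k n, π j) * (V (k + 1) - V k) ^ 2) := by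
        gcongr; exact sum_sum_mul_sq_sub_le hπ
    _ ≤ c * (2 * n * ∑ k ∈ range n,
          (n + 1) * W * (max (π k) (π (k + 1)) * (V (k + 1) - V k) ^ 2)) := by
        gcongr c * (_ * ?_); exact sum_le_sum hcut
    _ = 2 * W * (n * (n + 1) * ∑ k ∈ range n,
          c * max (π k) (π (k + 1)) * (V (k + 1) - V k) ^ 2) := by
        simp only [mul_sum]; exact sum_congr rfl fun k _ => by ring
    _ ≤ 2 * W * (n * (n + 1) * ∑ k ∈ range n, π k * up k * (V (k + 1) - V k) ^ 2) := by
        gcongr 2 * W * (_ * ?_)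
        exact sum_le_sum fun k hk =>
          mul_le_mul_of_nonneg_right (hedge k (mem_range.mp hk)) (sq_nonneg _)

theorem le_mul_of_bdLaplacian_eq {up down : ℕ → ℝ} {c ν : ℝ} (hπ : ∀ i, 0 ≤ π i)
    (hπsum : 0 < ∑ i ∈ range (n + 1), π i)
    (hmode : ∀ k, MonotoneOn π (Set.Iic k) ∨ AntitoneOn π (Set.Ici (k + 1)))
    (hc : 0 ≤ c) (hup : ∀ k < n, c ≤ up k) (hdown : ∀ k < n, c ≤ down (k + 1))
    (hbal : ∀ k < n, π k * up k = π (k + 1) * down (k + 1)) (hupn : up n = 0)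
    (hV : ∀ i ≤ n, bdLaplacian up down V i = ν * V i) (hν : ν ≠ 0)
    (hVpos : 0 < ∑ i ∈ range (n + 1), π i * V i ^ 2) :
    c ≤ n * (n + 1) * ν := by
  have h := poincare_of_unimodal hπ hπsum hmode hc hup hdown hbal
    (sum_mul_eq_zero_of_bdLaplacian_eq hbal hupn hV hν)
  rw [← mul_sum_sq_eq_of_bdLaplacian_eq hbal hupn hV, ← mul_assoc] at h
  exact le_of_mul_le_mul_right h hVpos

end Poincare

section Binomial

/-- Proportional to the stationary distribution `ν`. -/
def binomWeight (n : ℕ) (θ : ℝ) (k : ℕ) : ℝ := n.choose k * θ ^ k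

variable {n : ℕ} {θ : ℝ}

theorem binomWeight_succ_mul (k : ℕ) :
    binomWeight n θ (k + 1) * (k + 1) = binomWeight n θ k * (θ * (n - k : ℕ)) := by
  have h : ((n.choose (k + 1) : ℕ) : ℝ) * ((k + 1 : ℕ) : ℝ) = n.choose k * (n - k : ℕ) := by
    exact_mod_cast Nat.choose_succ_right_eq n k
  simp only [binomWeight]
  push_cast at h ⊢
  linear_combination θ ^ (k + 1) * h

theorem binomWeight_nonneg (hθ : 0 ≤ θ) (k : ℕ) : 0 ≤ binomWeight n θ k := by
  unfold binomWeight; positivity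

theorem binomWeight_pos (hθ : 0 < θ) {k : ℕ} (hk : k ≤ n) : 0 < binomWeight n θ k := by
  unfold binomWeight
  have : (0 : ℝ) < n.choose k := by exact_mod_cast Nat.choose_pos hk
  positivity

/-- The ratio `binomWeight (k + 1) / binomWeight k = θ (n - k) / (k + 1)` is decreasing in `k`,
so the weights increase up to `k` or decrease from `k + 1` on, according as it is `≥ 1`
or `≤ 1` at `k`. -/
theorem binomWeight_unimodal (hθ : 0 ≤ θ) (k : ℕ) :
    MonotoneOn (binomWeight n θ) (Set.Iic k) ∨ AntitoneOn (binomWeight n θ) (Set.Ici (k + 1)) := by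
  have hratio : ∀ {i j : ℕ}, i ≤ j → θ * (n - j : ℕ) ≤ θ * (n - i : ℕ) := fun _ => by gcongr
  rcases le_total (θ * (n - k : ℕ)) (k + 1) with h | h
  · refine Or.inr (antitoneOn_nat_Ici_of_succ_le fun i hi => ?_)
    refine le_of_mul_le_mul_right ?_ (by positivity : (0 : ℝ) < i + 1)
    rw [binomWeight_succ_mul]
    refine mul_le_mul_of_nonneg_left ?_ (binomWeight_nonneg hθ i)
    have : (k : ℝ) ≤ i := by exact_mod_cast (by omega : k ≤ i)
    linarith [hratio (by omega : k ≤ i)]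
  · refine Or.inl (monotoneOn_of_le_add_one Set.ordConnected_Iic fun i _ _ hi => ?_)
    refine le_of_mul_le_mul_right ?_ (by positivity : (0 : ℝ) < i + 1)
    rw [binomWeight_succ_mul]
    refine mul_le_mul_of_nonneg_left ?_ (binomWeight_nonneg hθ i)
    have : (i : ℝ) + 1 ≤ k := by exact_mod_cast (Set.mem_Iic.mp hi)
    linarith [hratio (by simp at hi; omega : i ≤ k)]

end Binomial

section BirthDeathMatrix

noncomputable def bdBirthRate (n : ℕ) (γmin lam : ℝ) (k : ℕ) : ℝ := γmin / lam * (1 - k / n)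

noncomputable def bdDeathRate (n q : ℕ) (γmax lam : ℝ) (k : ℕ) : ℝ := γmax * k / (n * q * lam)

def zeroExtend {m : ℕ} (v : Fin m → ℝ) (k : ℕ) : ℝ := if h : k < m then v ⟨k, h⟩ else 0

variable {n q : ℕ} {γmin γmax lam : ℝ}

theorem bdMatrix_mulVec_apply (v : Fin (n + 1) → ℝ) (i : Fin (n + 1)) :
    (bdMatrix n q γmin γmax lam).mulVec v i = zeroExtend v i -
      bdLaplacian (bdBirthRate n γmin lam) (bdDeathRate n q γmax lam) (zeroExtend v) i := by
  let row : ℕ → ℝ := fun k =>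
    (if k = i - 1 then bdDeathRate n q γmax lam i * zeroExtend v k else 0) +
      (if k = i + 1 then bdBirthRate n γmin lam i * zeroExtend v k else 0) +
      (if k = i then
        (1 - bdDeathRate n q γmax lam i - bdBirthRate n γmin lam i) * zeroExtend v k else 0)
  have hentry : ∀ j : Fin (n + 1), bdMatrix n q γmin γmax lam i j * v j = row j := by
    intro j
    simp only [row, bdMatrix, Matrix.of_apply, Fin.ext_iff, zeroExtend, dif_pos j.isLt,
      bdBirthRate, bdDeathRate]
    split_ifs <;> first | omega | ring1 | (rw [show (i : ℕ) = 0 by omega]; ring1)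
  rw [Matrix.mulVec, dotProduct, sum_congr rfl fun j _ => hentry j,
    Fin.sum_univ_eq_sum_range row]
  simp only [row, sum_add_distrib, sum_ite_eq', mem_range, bdLaplacian]
  rw [if_pos (by omega), if_pos i.isLt]
  by_cases h : (i : ℕ) + 1 < n + 1
  · rw [if_pos h]; ring
  · rw [if_neg h, show zeroExtend v (i + 1) = 0 from dif_neg h]; ring

theorem bdLaplacian_zeroExtend_eq {μ : ℝ} {v : Fin (n + 1) → ℝ}
    (heig : (bdMatrix n q γmin γmax lam).mulVec v = μ • v) {i : ℕ} (hi : i ≤ n) :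
    bdLaplacian (bdBirthRate n γmin lam) (bdDeathRate n q γmax lam) (zeroExtend v) i =
      (1 - μ) * zeroExtend v i := by
  have h := congrFun heig ⟨i, Nat.lt_succ_of_le hi⟩
  simp only [bdMatrix_mulVec_apply, Pi.smul_apply, smul_eq_mul] at h
  rw [← show zeroExtend v i = v ⟨i, Nat.lt_succ_of_le hi⟩ from dif_pos (Nat.lt_succ_of_le hi)] at h
  linear_combination -h

theorem sum_binomWeight_mul_zeroExtend_sq_pos {θ : ℝ} (hθ : 0 < θ) {v : Fin (n + 1) → ℝ}
    (hv : v ≠ 0) : 0 < ∑ i ∈ range (n + 1), binomWeight n θ i * zeroExtend v i ^ 2 := by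
  obtain ⟨j, hj⟩ := Function.ne_iff.mp hv
  have hvj : zeroExtend v j ≠ 0 := by rwa [show zeroExtend v j = v j from dif_pos j.isLt]
  exact sum_pos' (fun i _ => mul_nonneg (binomWeight_nonneg hθ.le i) (sq_nonneg _))
    ⟨j, mem_range.mpr j.isLt,
      mul_pos (binomWeight_pos hθ (Nat.lt_succ_iff.mp j.isLt)) (sq_pos_of_ne_zero hvj)⟩

theorem bdBirthRate_self (hn : (n : ℝ) ≠ 0) : bdBirthRate n γmin lam n = 0 := by
  simp [bdBirthRate, hn]

theorem div_le_bdBirthRate {c : ℝ} (hc : c ≤ γmin) (hγmin : 0 ≤ γmin) (hlam : 0 ≤ lam) {k : ℕ}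
    (hk : k < n) : c / (n * lam) ≤ bdBirthRate n γmin lam k := by
  have hn : (0 : ℝ) < n := by exact_mod_cast (k.zero_le.trans_lt hk)
  have hkn : (k : ℝ) + 1 ≤ n := by exact_mod_cast hk
  calc c / (n * lam) ≤ γmin / (n * lam) := by gcongr
    _ = γmin / lam * (1 / n) := by ring
    _ ≤ γmin / lam * (1 - k / n) := by
        gcongr
        rw [le_sub_iff_add_le, ← add_div, div_le_one hn]
        linarith

theorem div_le_bdDeathRate_succ {c : ℝ} (hc : c ≤ γmax / q) (hγmax : 0 ≤ γmax) (hlam : 0 ≤ lam)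
    (k : ℕ) : c / (n * lam) ≤ bdDeathRate n q γmax lam (k + 1) := by
  refine (div_le_div_of_nonneg_right hc (by positivity)).trans ?_
  rw [bdDeathRate, div_div, mul_left_comm, ← mul_assoc]
  gcongr
  push_cast
  nlinarith [(k.cast_nonneg : (0 : ℝ) ≤ k)]

theorem bdMatrix_detailedBalance (hq : (q : ℝ) ≠ 0) (hγmax : γmax ≠ 0) {k : ℕ} (hk : k < n) :
    binomWeight n (q * γmin / γmax) k * bdBirthRate n γmin lam k =
      binomWeight n (q * γmin / γmax) (k + 1) * bdDeathRate n q γmax lam (k + 1) := by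
  have hn : (n : ℝ) ≠ 0 := by exact_mod_cast (k.zero_le.trans_lt hk).ne'
  have hstep := binomWeight_succ_mul (n := n) (θ := q * γmin / γmax) k
  rw [Nat.cast_sub hk.le] at hstep
  calc binomWeight n (q * γmin / γmax) k * bdBirthRate n γmin lam k
      = binomWeight n (q * γmin / γmax) k * (q * γmin / γmax * (n - k)) *
          (γmax / (n * q * lam)) := by
        unfold bdBirthRate; field_simp
    _ = _ := by rw [← hstep, bdDeathRate]; push_cast; ring

end BirthDeathMatrix

/-- **Spectral gap lower bound for the birth-death chain (Lemma 9).**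
Every real eigenvalue `μ` of `B` other than `1` satisfies
`μ ≤ 1 − min(γmax/q, γmin)/(λ n² (n+1)²)`; equivalently, the spectral gap
`1 − λ₂` is at least `min(γmax/q, γmin)/(λ n² (n+1)²)`. -/
theorem bd_spectral_gap_bound
    (n q : ℕ) (hn : 1 ≤ n) (hq : 1 ≤ q)
    (γmin γmax lam : ℝ)
    (hγmin : 0 < γmin) (hγ : γmin ≤ γmax)
    (hlam : max γmax (γmin + γmax / (q : ℝ)) ≤ lam)
    (μ : ℝ) (v : Fin (n + 1) → ℝ) (hv : v ≠ 0)
    (heig : (bdMatrix n q γmin γmax lam).mulVec v = μ • v)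
    (hμ : μ ≠ 1) :
    μ ≤ 1 - min (γmax / q) γmin / (lam * (n : ℝ) ^ 2 * ((n : ℝ) + 1) ^ 2) := by
  have hγmax : 0 < γmax := hγmin.trans_le hγ
  have hlam0 : 0 < lam := hγmax.trans_le ((le_max_left _ _).trans hlam)
  have hn0 : (0 : ℝ) < n := by exact_mod_cast hn
  have hq0 : (0 : ℝ) < q := by exact_mod_cast hq
  set θ := q * γmin / γmax
  have hθ : 0 < θ := by positivity
  set m := min (γmax / q) γmin
  have hgap : m / (n * lam) ≤ n * (n + 1) * (1 - μ) :=
    le_mul_of_bdLaplacian_eq (binomWeight_nonneg hθ.le)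
      (sum_pos' (fun i _ => binomWeight_nonneg hθ.le i) ⟨0, by simp, binomWeight_pos hθ n.zero_le⟩)
      (binomWeight_unimodal hθ.le) (by positivity)
      (fun k hk => div_le_bdBirthRate (min_le_right _ _) hγmin.le hlam0.le hk)
      (fun k _ => div_le_bdDeathRate_succ (min_le_left _ _) hγmax.le hlam0.le k)
      (fun k hk => bdMatrix_detailedBalance hq0.ne' hγmax.ne' hk) (bdBirthRate_self hn0.ne')
      (fun i hi => bdLaplacian_zeroExtend_eq heig hi)
      (sub_ne_zero.mpr hμ.symm) (sum_binomWeight_mul_zeroExtend_sq_pos hθ hv)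
  have hm : 0 < m := lt_min (by positivity) hγmin
  rw [div_le_iff₀ (by positivity)] at hgap
  rw [le_sub_iff_add_le, ← le_sub_iff_add_le', div_le_iff₀ (by positivity)]
  nlinarith
end
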